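/- arXiv:2510.10498 — 3 statements merged into one kernel-verified Lean document; each statement's English description precedes it below -/
import Mathlib

section
/- Let G be a graph of order n ≥ 2 with e(G) edges. Then q(G) ≤ 2e(G)/(n−1) + n − 2. -/
open scoped Classical ENNReal

noncomputable def signlessLaplacian {V : Type*} [Fintype V] [DecidableEq V]
    (G : SimpleGraph V) : Matrix V V ℝ :=
  Matrix.of fun u v =>
    (if u = v then ((G.neighborSet u).ncard : ℝ) else 0) + (if G.Adj u v then 1 else 0)

/-- The `Q`-index: the largest eigenvalue of the signless Laplacian `D(G) + A(G)`. -/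
noncomputable def qIndex {V : Type*} [Fintype V] [DecidableEq V]
    (G : SimpleGraph V) : ℝ :=
  sSup (spectrum ℝ (signlessLaplacian G))

/-- `K_s ∨ (K_{ns 0} ∪ K_{ns 1} ∪ ⋯)` : the join of a clique of size `s` with a
disjoint union of cliques of sizes `ns i`. -/
def joinCliques (s : ℕ) {t : ℕ} (ns : Fin t → ℕ) :
    SimpleGraph (Fin s ⊕ (Σ i : Fin t, Fin (ns i))) where
  Adj u v := u ≠ v ∧ ((∃ a, u = Sum.inl a) ∨ (∃ a, v = Sum.inl a) ∨
      ∃ (i : Fin t) (x y : Fin (ns i)), u = Sum.inr ⟨i, x⟩ ∧ v = Sum.inr ⟨i, y⟩)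
  symm := by
    constructor
    rintro u v ⟨hne, h⟩
    refine ⟨hne.symm, ?_⟩
    rcases h with ⟨a, ha⟩ | ⟨a, ha⟩ | ⟨i, x, y, hx, hy⟩
    · exact Or.inr (Or.inl ⟨a, ha⟩)
    · exact Or.inl ⟨a, ha⟩
    · exact Or.inr (Or.inr ⟨i, y, x, hy, hx⟩)
  loopless := ⟨fun u h => h.1 rfl⟩

/-- `c(G - S)`: number of connected components after deleting the vertex set `S`. -/
noncomputable def numComp {V : Type*} (G : SimpleGraph V) (S : Set V) : ℕ :=
  Nat.card (G.induce Sᶜ).ConnectedComponent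

/-- The `l`-toughness `t_l(G) = min { |S| / c(G-S) : S ⊂ V(G), c(G-S) ≥ l }`,
with value `+∞` (the empty infimum in `ℝ≥0∞`) if no such `S` exists. -/
noncomputable def lToughness {V : Type*} [Fintype V] (G : SimpleGraph V) (l : ℕ) : ℝ≥0∞ :=
  ⨅ (S : Finset V) (_ : l ≤ numComp G (S : Set V)),
    (S.card : ℝ≥0∞) / (numComp G (S : Set V) : ℝ≥0∞)

/-!
Let `μ > 0` be an eigenvalue of `Q(G)` with eigenvector `y`, and let `v` maximise `|y u| / d(u)`.
Reading `Q y = μ y` at `v` gives Das' bound `μ ≤ d(v) + m(v)`, where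
`d(v) m(v) = ∑_{u ∼ v} d(u)`.
Counting the edges at the neighbourhood `N(v)` bounds `∑_{u ∼ v} d(u)` by `2e - d(v)`, by
`e + d(v)(d(v) - 1)/2` and by `d(v)(n - 1)`; a suitable combination of the three bounds gives
`d(v) + m(v) ≤ 2e/(n-1) + n - 2`.
-/

open Finset
open scoped Matrix

namespace SimpleGraph

variable {V : Type*} [Fintype V] (G : SimpleGraph V)

lemma sum_degree_neighborFinset_add_degree_le (v : V) :
    ∑ u ∈ G.neighborFinset v, G.degree u + G.degree v ≤ 2 * #G.edgeFinset := by
  have hsub : ∑ u ∈ insert v (G.neighborFinset v), G.degree u ≤ ∑ u, G.degree u :=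
    sum_le_sum_of_subset (subset_univ _)
  rw [sum_insert (G.notMem_neighborFinset_self v)] at hsub
  rw [← sum_degrees_eq_twice_card_edges]
  omega

lemma sum_degree_neighborFinset_le (v : V) :
    ∑ u ∈ G.neighborFinset v, G.degree u ≤ G.degree v * (Fintype.card V - 1) := by
  calc ∑ u ∈ G.neighborFinset v, G.degree u
      ≤ ∑ _u ∈ G.neighborFinset v, (Fintype.card V - 1) :=
        sum_le_sum fun u _ => Nat.le_pred_of_lt (G.degree_lt_card_verts u)
    _ = G.degree v * (Fintype.card V - 1) := by
        rw [sum_const, smul_eq_mul, card_neighborFinset_eq_degree]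

lemma two_mul_sum_degree_neighborFinset_add_degree_le (v : V) :
    2 * ∑ u ∈ G.neighborFinset v, G.degree u + G.degree v
      ≤ 2 * #G.edgeFinset + G.degree v ^ 2 := by
  set N := G.neighborFinset v
  have hsplit (w : V) : G.degree w = #{u ∈ N | G.Adj w u} + #{u ∈ Nᶜ | G.Adj w u} := by
    rw [← card_neighborFinset_eq_degree, neighborFinset_eq_filter, ← card_union_of_disjoint
      (disjoint_filter_filter disjoint_compl_right), ← filter_union, union_compl]
  have hinside : ∑ w ∈ N, #{u ∈ N | G.Adj w u} + #N ≤ #N * #N := by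
    have hle (w : V) (hw : w ∈ N) : #{u ∈ N | G.Adj w u} + 1 ≤ #N := by
      calc #{u ∈ N | G.Adj w u} + 1 ≤ #(N.erase w) + 1 := by
            gcongr
            intro u hu
            rw [mem_filter] at hu
            exact mem_erase.2 ⟨(G.ne_of_adj hu.2).symm, hu.1⟩
        _ = #N := card_erase_add_one hw
    calc ∑ w ∈ N, #{u ∈ N | G.Adj w u} + #N = ∑ w ∈ N, (#{u ∈ N | G.Adj w u} + 1) := by
          rw [sum_add_distrib, card_eq_sum_ones]
      _ ≤ ∑ _w ∈ N, #N := sum_le_sum hle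
      _ = #N * #N := by rw [sum_const, smul_eq_mul]
  have hcross : ∑ w ∈ N, #{u ∈ Nᶜ | G.Adj w u} ≤ ∑ u ∈ Nᶜ, G.degree u := by
    refine (sum_card_bipartiteAbove_eq_sum_card_bipartiteBelow G.Adj).le.trans
      (sum_le_sum fun u _ => ?_)
    rw [← card_neighborFinset_eq_degree]
    exact card_le_card fun w hw => (G.mem_neighborFinset u w).2 (mem_filter.1 hw).2.symm
  have htotal : ∑ u ∈ N, G.degree u + ∑ u ∈ Nᶜ, G.degree u = 2 * #G.edgeFinset := by
    rw [sum_add_sum_compl, sum_degrees_eq_twice_card_edges]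
  rw [sum_congr rfl fun w _ => hsplit w, sum_add_distrib] at htotal ⊢
  rw [← card_neighborFinset_eq_degree]
  linarith

lemma degree_add_sum_degree_div_degree_le {v : V} (hv : 0 < G.degree v) :
    (G.degree v : ℝ) + (∑ u ∈ G.neighborFinset v, G.degree u : ℕ) / G.degree v
      ≤ 2 * #G.edgeFinset / (Fintype.card V - 1 : ℝ) + Fintype.card V - 2 := by
  have hdn := G.degree_lt_card_verts v
  have hhand := G.sum_degree_neighborFinset_add_degree_le v
  have hmax := G.sum_degree_neighborFinset_le v
  have hcount := G.two_mul_sum_degree_neighborFinset_add_degree_le v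
  set n := Fintype.card V
  set d := G.degree v
  set s := ∑ u ∈ G.neighborFinset v, G.degree u
  set e := #G.edgeFinset
  have hd : (0 : ℝ) < d := by exact_mod_cast hv
  have hn : (0 : ℝ) < n - 1 := by
    have : (2 : ℝ) ≤ n := by exact_mod_cast (show 2 ≤ n by omega)
    linarith
  have key : ((n : ℝ) - 1) * (d ^ 2 + s) ≤ (2 * e + (n - 1) * (n - 2)) * d := by
    have hd1 : (1 : ℝ) ≤ d := by exact_mod_cast hv
    have hhand : (s : ℝ) + d ≤ 2 * e := by exact_mod_cast hhand
    have hcount : 2 * (s : ℝ) + d ≤ 2 * e + d ^ 2 := by exact_mod_cast hcount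
    -- integrality of `d` (no `d` strictly between `n - 2` and `n - 1`) is needed here
    obtain hfull | hlt : d = n - 1 ∨ d + 2 ≤ n := by omega
    · have : (d : ℝ) = n - 1 := by rw [hfull, Nat.cast_pred (by omega)]
      rw [← this]
      nlinarith
    · have hmax : (s : ℝ) ≤ d * (n - 1) := by
        rw [← Nat.cast_pred (by omega)]; exact_mod_cast hmax
      have hlt : (d : ℝ) + 2 ≤ n := by exact_mod_cast hlt
      rcases le_total (2 * (d : ℝ)) (n - 1) with hsmall | hlarge
      · nlinarith [mul_nonneg hd.le (sub_nonneg.2 hcount), mul_nonneg (sub_nonneg.2 hsmall)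
          (sub_nonneg.2 hmax), mul_nonneg (mul_nonneg hd.le (sub_nonneg.2 hlt)) (sub_nonneg.2 hd1)]
      · nlinarith [mul_nonneg (sub_nonneg.2 hlarge) (sub_nonneg.2 hhand),
          mul_nonneg (sub_nonneg.2 hlt) (sub_nonneg.2 hcount),
          mul_nonneg (mul_nonneg hd.le (sub_nonneg.2 hlt)) (sub_nonneg.2 hlt)]
  calc (d : ℝ) + s / d = (d ^ 2 + s) / d := by field_simp
    _ ≤ (2 * e + (n - 1) * (n - 2)) / (n - 1) := by rw [div_le_div_iff₀ hd hn]; linarith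
    _ = 2 * e / (n - 1) + n - 2 := by field_simp; ring

section Spectral

variable [DecidableEq V]

lemma signlessLaplacian_mulVec_apply (y : V → ℝ) (v : V) :
    (signlessLaplacian G *ᵥ y) v = G.degree v * y v + ∑ u ∈ G.neighborFinset v, y u := by
  have hdeg : (G.neighborSet v).ncard = G.degree v := by
    rw [Set.ncard_eq_toFinset_card', ← neighborFinset_def, card_neighborFinset_eq_degree]
  simp only [Matrix.mulVec, dotProduct, signlessLaplacian, Matrix.of_apply, add_mul, ite_mul,
    zero_mul, one_mul, sum_add_distrib, sum_ite_eq, mem_univ, if_true, hdeg,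
    neighborFinset_eq_filter, sum_filter]

lemma abs_signlessLaplacian_mulVec_le {y : V → ℝ} {c : ℝ}
    (hy : ∀ u, |y u| ≤ c * G.degree u) (v : V) :
    |(signlessLaplacian G *ᵥ y) v|
      ≤ c * (G.degree v ^ 2 + (∑ u ∈ G.neighborFinset v, G.degree u : ℕ)) := by
  rw [signlessLaplacian_mulVec_apply]
  calc |G.degree v * y v + ∑ u ∈ G.neighborFinset v, y u|
      ≤ G.degree v * |y v| + ∑ u ∈ G.neighborFinset v, |y u| := by
        refine (abs_add_le _ _).trans (add_le_add ?_ (abs_sum_le_sum_abs _ _))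
        rw [abs_mul, Nat.abs_cast]
    _ ≤ G.degree v * (c * G.degree v) + ∑ u ∈ G.neighborFinset v, c * G.degree u := by
        gcongr with u
        exacts [hy v, hy u]
    _ = c * (G.degree v ^ 2 + (∑ u ∈ G.neighborFinset v, G.degree u : ℕ)) := by
        push_cast; rw [← mul_sum]; ring

lemma exists_le_degree_add_sum_degree_div_degree {μ : ℝ}
    (hμ : μ ∈ spectrum ℝ (signlessLaplacian G)) (hμ0 : 0 < μ) :
    ∃ v, 0 < G.degree v ∧
      μ ≤ G.degree v + (∑ u ∈ G.neighborFinset v, G.degree u : ℕ) / G.degree v := by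
  rw [← Matrix.spectrum_toLin', ← Module.End.hasEigenvalue_iff_mem_spectrum] at hμ
  obtain ⟨y, hy⟩ := hμ.exists_hasEigenvector
  have heig (u : V) : (signlessLaplacian G *ᵥ y) u = μ * y u :=
    congrFun hy.apply_eq_smul u
  have hiso (u : V) (hu : G.degree u = 0) : y u = 0 := by
    have := heig u
    rw [signlessLaplacian_mulVec_apply, hu,
      card_eq_zero.1 ((G.card_neighborFinset_eq_degree u).trans hu)] at this
    simpa [hμ0.ne'] using this.symm
  obtain ⟨w, hw⟩ := Function.ne_iff.1 hy.2
  -- isolated vertices contribute `|0| / 0 = 0` to the maximum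
  obtain ⟨v, -, hmax⟩ := exists_max_image univ (fun u => |y u| / G.degree u) ⟨w, mem_univ w⟩
  set c := |y v| / G.degree v
  have hbound (u : V) : |y u| ≤ c * G.degree u := by
    rcases eq_or_ne (G.degree u) 0 with hu | hu
    · simp [hiso u hu, hu]
    · exact (div_le_iff₀ (by positivity)).1 (hmax u (mem_univ u))
  have hc : 0 < c := by
    have hdw : G.degree w ≠ 0 := fun h => hw (hiso w h)
    exact (div_pos (abs_pos.2 hw) (by positivity)).trans_le (hmax w (mem_univ w))
  have hdv : 0 < G.degree v := by
    refine Nat.pos_of_ne_zero fun h => hc.ne' ?_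
    simp [c, h]
  have hyv : |y v| = c * G.degree v := by simp only [c]; field_simp
  refine ⟨v, hdv, ?_⟩
  have hQv := G.abs_signlessLaplacian_mulVec_le hbound v
  rw [heig, abs_mul, abs_of_pos hμ0, hyv] at hQv
  have hdv' : (0 : ℝ) < G.degree v := by exact_mod_cast hdv
  have hμv :
      μ * G.degree v ≤ G.degree v ^ 2 + (∑ u ∈ G.neighborFinset v, G.degree u : ℕ) :=
    le_of_mul_le_mul_left (by linarith) hc
  rw [← sub_le_iff_le_add', le_div_iff₀ hdv']
  linarith

end Spectral

end SimpleGraph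

/-- **Lemma 2.4.** For a graph `G` of order `n ≥ 2`, `q(G) ≤ 2e(G)/(n−1) + n − 2`. -/
theorem statement5 {V : Type*} [Fintype V] [DecidableEq V]
    (G : SimpleGraph V) (hn : 2 ≤ Fintype.card V) :
    qIndex G ≤ 2 * (G.edgeSet.ncard : ℝ) / ((Fintype.card V : ℝ) - 1)
      + (Fintype.card V : ℝ) - 2 := by
  have hbound : 0 ≤ 2 * (G.edgeSet.ncard : ℝ) / ((Fintype.card V : ℝ) - 1)
      + (Fintype.card V : ℝ) - 2 := by
    have : (2 : ℝ) ≤ Fintype.card V := by exact_mod_cast hn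
    have : 0 ≤ 2 * (G.edgeSet.ncard : ℝ) / ((Fintype.card V : ℝ) - 1) := by
      apply div_nonneg <;> linarith
    linarith
  refine Real.sSup_le (fun μ hμ => ?_) hbound
  rcases le_or_gt μ 0 with hμ0 | hμ0
  · linarith
  obtain ⟨v, hv, hμv⟩ := G.exists_le_degree_add_sum_degree_div_degree hμ hμ0
  rw [Set.ncard_eq_toFinset_card', Set.toFinset_card, ← SimpleGraph.edgeFinset_card]
  exact hμv.trans (G.degree_add_sum_degree_div_degree_le hv)
end

section
/- Let b ≥ 1 and l ≥ 2 be integers and let n ≥ (b+1)l − 1. Then the graph G = K_{bl−1} ∨ (K_{n−(b+1)l+2} ∪ (l−1)K_1) satisfies t_l(G) ≤ (bl−1)/l < b; in particular, G is not (b,l)-tough. -/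
open scoped Classical ENNReal

/-!
Deleting the join part `K_{bl−1}` leaves the `l` cliques as the components, all of them nonempty
because `n ≥ (b+1)l − 1`; this separator witnesses `t_l(G) ≤ (bl−1)/l`, and `bl − 1 < bl`.
-/

namespace SimpleGraph

variable {V α : Type*} (G : SimpleGraph V)

theorem card_connectedComponent_eq_of_surjective (f : V → α) (hf : Function.Surjective f)
    (hadj : ∀ u v, G.Adj u v → f u = f v) (hreach : ∀ u v, f u = f v → G.Reachable u v) :
    Nat.card G.ConnectedComponent = Nat.card α := by
  have hf_reach {u v : V} (h : G.Reachable u v) : f u = f v := by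
    simpa [Relation.reflTransGen_eq_self] using
      ((G.reachable_iff_reflTransGen u v).1 h).lift f hadj
  refine Nat.card_eq_of_bijective (ConnectedComponent.lift f fun u v p _ => hf_reach p.reachable)
    ⟨fun c d => ConnectedComponent.ind₂ (fun u v h => ConnectedComponent.sound (hreach u v h)) c d,
     fun a => ?_⟩
  obtain ⟨v, rfl⟩ := hf a
  exact ⟨G.connectedComponentMk v, rfl⟩

end SimpleGraph

theorem lToughness_le_card_div_numComp {V : Type*} [Fintype V] (G : SimpleGraph V) {l : ℕ}
    (S : Finset V) (hS : l ≤ numComp G S) :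
    lToughness G l ≤ (S.card : ℝ≥0∞) / (numComp G S : ℝ≥0∞) :=
  iInf₂_le S hS

section joinCliques

variable {s t : ℕ} {ns : Fin t → ℕ}

theorem joinCliques_adj_inr_inr {p q : Σ i : Fin t, Fin (ns i)} :
    (joinCliques s ns).Adj (.inr p) (.inr q) ↔ p ≠ q ∧ p.1 = q.1 := by
  obtain ⟨i, x⟩ := p
  obtain ⟨j, y⟩ := q
  constructor
  · rintro ⟨hne, ⟨_, ⟨⟩⟩ | ⟨_, ⟨⟩⟩ | ⟨_, _, _, ⟨⟩, ⟨⟩⟩⟩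
    exact ⟨fun h => hne (congrArg _ h), rfl⟩
  · rintro ⟨hne, rfl : i = j⟩
    exact ⟨by simpa using hne, .inr (.inr ⟨i, x, y, rfl, rfl⟩)⟩

theorem numComp_joinCliques_range_inl (hns : ∀ i, 1 ≤ ns i) :
    numComp (joinCliques s ns) (Set.range Sum.inl) = t := by
  let toCompl (p : Σ i : Fin t, Fin (ns i)) : ↥(Set.range (Sum.inl : Fin s → _))ᶜ :=
    ⟨.inr p, by simp⟩
  have hcompl : Function.Bijective toCompl := by
    refine ⟨fun p q h => Sum.inr_injective (congrArg Subtype.val h), ?_⟩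
    rintro ⟨_ | p, hp⟩
    exacts [(hp ⟨_, rfl⟩).elim, ⟨p, rfl⟩]
  let block v : Fin t := ((Equiv.ofBijective toCompl hcompl).symm v).1
  have block_toCompl p : block (toCompl p) = p.1 := by
    simp only [block, Equiv.ofBijective_symm_apply_apply]
  refine (SimpleGraph.card_connectedComponent_eq_of_surjective _ block ?_ ?_ ?_).trans
    (Nat.card_eq_fintype_card.trans (Fintype.card_fin t))
  · exact fun i => ⟨toCompl ⟨i, ⟨0, hns i⟩⟩, block_toCompl _⟩
  · refine hcompl.2.forall₂.2 fun p q h => ?_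
    rw [block_toCompl, block_toCompl]
    exact (joinCliques_adj_inr_inr.1 h).2
  · refine hcompl.2.forall₂.2 fun p q h => ?_
    rw [block_toCompl, block_toCompl] at h
    obtain rfl | hpq := eq_or_ne p q
    · rfl
    · exact SimpleGraph.Adj.reachable (joinCliques_adj_inr_inr.2 ⟨hpq, h⟩)

theorem lToughness_joinCliques_le (hns : ∀ i, 1 ≤ ns i) :
    lToughness (joinCliques s ns) t ≤ (s : ℝ≥0∞) / (t : ℝ≥0∞) := by
  have hS : ((Finset.univ.map .inl : Finset (Fin s ⊕ Σ i : Fin t, Fin (ns i))) :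
      Set (Fin s ⊕ Σ i : Fin t, Fin (ns i))) = Set.range Sum.inl := by
    simp
  have hcomp := numComp_joinCliques_range_inl (s := s) hns
  have h := lToughness_le_card_div_numComp _ (Finset.univ.map .inl) (by rw [hS, hcomp])
  rwa [hS, hcomp, Finset.card_map, Finset.card_univ, Fintype.card_fin] at h

end joinCliques

/-- For `b ≥ 1`, `l ≥ 2` and `n ≥ (b+1)l − 1`, the graph
`G = K_{bl−1} ∨ (K_{n−(b+1)l+2} ∪ (l−1)K₁)` satisfies `t_l(G) ≤ (bl−1)/l < b`;
in particular `G` is not `(b, l)`-tough. -/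
theorem statement6 (b l n : ℕ) (hb : 1 ≤ b) (hl : 2 ≤ l) (hn : (b + 1) * l - 1 ≤ n) :
    lToughness (joinCliques (b * l - 1)
        (fun i : Fin l => if i.val = 0 then n + 2 - (b + 1) * l else 1)) l
      ≤ ((b * l - 1 : ℕ) : ℝ≥0∞) / (l : ℝ≥0∞) ∧
    ((b * l - 1 : ℕ) : ℝ≥0∞) / (l : ℝ≥0∞) < (b : ℝ≥0∞) := by
  have hbl : 0 < b * l := Nat.mul_pos hb (by omega)
  refine ⟨lToughness_joinCliques_le fun i => ?_, ENNReal.div_lt_of_lt_mul ?_⟩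
  · split_ifs <;> omega
  · exact_mod_cast Nat.sub_one_lt hbl.ne'
end

section
/- Let b ≥ 1 and l ≥ 2 be integers, let n ≥ max{(5b²/2 + 4b + 3)l − b² − 2b − 5, ((2b+1)l² + (2b−3)l + 2)/2}, and set ω = ⌈(n+2)/(b+1)⌉. Then q(K_{n−ω} ∨ ωK_1) < 2n − 2l. -/
open scoped Classical ENNReal

/-
The graph K_{n-ω} ∨ ωK₁ has an equitable partition into the clique and the independent set, so
its signless Laplacian maps a vector that is constant (x on the clique, y on the independent set)
to another such vector. With x = ω and y = ω - 2l + 1 every entry of Q w is below (2n - 2l) times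
the entry of w, and a positive vector with Q w < c w bounds every eigenvalue of the nonnegative
matrix Q by c (Gershgorin's theorem after conjugating by diag w). On the clique the inequality
reduces to ω > 0; on the independent set it is the quadratic inequality
(n - ω) ω < (n + ω - 2l)(ω - 2l + 1), which holds at ω = (n + 2)/(b + 1) by the lower bound on
n and persists for larger ω since the difference of the two sides is increasing there.
-/

open Matrix

namespace Matrix

variable {V : Type*} [Fintype V] [DecidableEq V]

theorem lt_of_mem_spectrum_of_mulVec_lt {M : Matrix V V ℝ} (hM : ∀ u v, 0 ≤ M u v)
    {w : V → ℝ} (hw : ∀ u, 0 < w u) {c : ℝ} (hMw : ∀ u, (M *ᵥ w) u < c * w u)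
    {μ : ℝ} (hμ : μ ∈ spectrum ℝ M) : μ < c := by
  let D : (Matrix V V ℝ)ˣ :=
    ⟨diagonal w, diagonal w⁻¹, by simp [(hw _).ne'], by simp [(hw _).ne']⟩
  set B : Matrix V V ℝ := (↑D⁻¹ : Matrix V V ℝ) * M * (D : Matrix V V ℝ)
  have hB : ∀ u v, B u v = (w u)⁻¹ * M u v * w v := fun u v => by
    simp [B, D, diagonal_mul, mul_diagonal]
  have hμB : Module.End.HasEigenvalue (toLin' B) μ := by
    rwa [Module.End.hasEigenvalue_iff_mem_spectrum, spectrum_toLin', spectrum.units_conjugate']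
  obtain ⟨k, hk⟩ := eigenvalue_mem_ball hμB
  rw [Metric.mem_closedBall, Real.dist_eq] at hk
  have hBnn : ∀ j, 0 ≤ B k j := fun j => by
    rw [hB]
    exact mul_nonneg (mul_nonneg (inv_pos.2 (hw k)).le (hM k j)) (hw j).le
  calc μ ≤ B k k + ∑ j ∈ Finset.univ.erase k, ‖B k j‖ := by
        linarith [le_abs_self (μ - B k k)]
    _ = ∑ j, B k j := by
      simp only [Real.norm_of_nonneg (hBnn _), Finset.add_sum_erase _ _ (Finset.mem_univ k)]
    _ = (w k)⁻¹ * (M *ᵥ w) k := by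
      simp only [hB, mulVec, dotProduct, Finset.mul_sum, mul_assoc]
    _ < (w k)⁻¹ * (c * w k) := mul_lt_mul_of_pos_left (hMw k) (inv_pos.2 (hw k))
    _ = c := by field_simp [(hw k).ne']

theorem sSup_spectrum_lt_of_mulVec_lt [Nonempty V] {M : Matrix V V ℝ}
    (hM : ∀ u v, 0 ≤ M u v) {w : V → ℝ} (hw : ∀ u, 0 < w u) {c : ℝ}
    (hMw : ∀ u, (M *ᵥ w) u < c * w u) : sSup (spectrum ℝ M) < c := by
  rcases (spectrum ℝ M).eq_empty_or_nonempty with h | h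
  · obtain ⟨u⟩ := ‹Nonempty V›
    have hMw_nonneg : 0 ≤ (M *ᵥ w) u :=
      Finset.sum_nonneg fun v _ => mul_nonneg (hM u v) (hw v).le
    rw [h, Real.sSup_empty]
    exact pos_of_mul_pos_left (hMw_nonneg.trans_lt (hMw u)) (hw u).le
  · exact lt_of_mem_spectrum_of_mulVec_lt hM hw hMw (h.csSup_mem (finite_spectrum M))

end Matrix

theorem signlessLaplacian_nonneg {V : Type*} [Fintype V] [DecidableEq V] (G : SimpleGraph V)
    (u v : V) : 0 ≤ signlessLaplacian G u v := by
  simp only [signlessLaplacian, of_apply]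
  positivity

theorem signlessLaplacian_mulVec_apply {V : Type*} [Fintype V] [DecidableEq V]
    (G : SimpleGraph V) (w : V → ℝ) (u : V) :
    (signlessLaplacian G *ᵥ w) u = G.degree u * w u + ∑ v ∈ G.neighborFinset u, w v := by
  simp only [signlessLaplacian, mulVec, dotProduct, of_apply, add_mul,
    Finset.sum_add_distrib, ite_mul, zero_mul, one_mul, Finset.sum_ite_eq, Finset.mem_univ,
    if_true, G.neighborFinset_eq_filter, Finset.sum_filter, ← G.card_neighborSet_eq_degree,
    Set.ncard_eq_toFinset_card', Set.toFinset_card]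

section JoinIndependent

variable {s t : ℕ}

theorem joinCliques_adj_inl {ns : Fin t → ℕ} (a : Fin s) (v) :
    (joinCliques s ns).Adj (Sum.inl a) v ↔ v ≠ Sum.inl a :=
  ⟨fun h => h.1.symm, fun h => ⟨h.symm, Or.inl ⟨a, rfl⟩⟩⟩

theorem joinCliques_one_adj_inr (p : Σ _ : Fin t, Fin 1) (v) :
    (joinCliques s fun _ : Fin t => 1).Adj (Sum.inr p) v ↔ ∃ a, Sum.inl a = v := by
  constructor
  · rintro ⟨hne, ⟨a, ha⟩ | ⟨a, rfl⟩ | ⟨i, x, y, hp, rfl⟩⟩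
    · cases ha
    · exact ⟨a, rfl⟩
    · cases Sum.inr.inj hp
      exact absurd (by rw [Subsingleton.elim x y]) hne
  · rintro ⟨a, rfl⟩
    exact ⟨Sum.inr_ne_inl, Or.inr (Or.inl ⟨a, rfl⟩)⟩

theorem joinCliques_neighborFinset_inl {ns : Fin t → ℕ} (a : Fin s) :
    (joinCliques s ns).neighborFinset (Sum.inl a) = Finset.univ.erase (Sum.inl a) := by
  ext v
  simp [joinCliques_adj_inl]

theorem joinCliques_one_neighborFinset_inr (p : Σ _ : Fin t, Fin 1) :
    (joinCliques s fun _ : Fin t => 1).neighborFinset (Sum.inr p) =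
      Finset.univ.map Function.Embedding.inl := by
  ext v
  simp [joinCliques_one_adj_inr]

theorem joinCliques_one_mulVec_inl (x y : ℝ) (a : Fin s) :
    (signlessLaplacian (joinCliques s fun _ : Fin t => 1) *ᵥ Sum.elim (fun _ => x) fun _ => y)
      (Sum.inl a) = (2 * s + t - 2) * x + t * y := by
  rw [signlessLaplacian_mulVec_apply, ← SimpleGraph.card_neighborFinset_eq_degree,
    joinCliques_neighborFinset_inl, Finset.sum_erase_eq_sub (Finset.mem_univ _),
    Finset.card_erase_of_mem (Finset.mem_univ _), Fintype.sum_sum_type]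
  have : 1 ≤ s + t := by have := a.pos; omega
  simp only [Finset.card_univ, Fintype.card_sum, Fintype.card_fin, Fintype.card_sigma,
    Fintype.card_unique, Finset.sum_const, smul_eq_mul, mul_one, Nat.cast_sub this, Nat.cast_add,
    Nat.cast_one, Sum.elim_inl, nsmul_eq_mul, Sum.elim_inr]
  ring

theorem joinCliques_one_mulVec_inr (x y : ℝ) (p : Σ _ : Fin t, Fin 1) :
    (signlessLaplacian (joinCliques s fun _ : Fin t => 1) *ᵥ Sum.elim (fun _ => x) fun _ => y)
      (Sum.inr p) = s * y + s * x := by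
  rw [signlessLaplacian_mulVec_apply, ← SimpleGraph.card_neighborFinset_eq_degree,
    joinCliques_one_neighborFinset_inr]
  simp

end JoinIndependent

section Arithmetic

variable {b l n ω : ℝ}

theorem two_mul_sub_one_lt (hb : 1 ≤ b) (hl : 2 ≤ l)
    (hn : (5 * b ^ 2 + 8 * b + 6) * l - 2 * b ^ 2 - 4 * b - 10 ≤ 2 * n)
    (hω : n + 2 ≤ (b + 1) * ω) : 2 * l - 1 < ω := by
  have h : (b + 1) * (2 * l - 1) < (b + 1) * ω := by
    nlinarith [mul_nonneg (sub_nonneg.2 hl) (by positivity : (0 : ℝ) ≤ 5 * b ^ 2 + 4 * b + 2)]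
  exact lt_of_mul_lt_mul_left h (by linarith)

theorem le_of_mul_le_add (hb : 1 ≤ b) (hl : 2 ≤ l)
    (hn : (2 * b + 1) * l ^ 2 + (2 * b - 3) * l + 2 ≤ 2 * n)
    (hω : (b + 1) * ω ≤ n + b + 2) : ω ≤ n := by
  have h6 : 6 * b ≤ n := by nlinarith [mul_nonneg (sub_nonneg.2 hl) (sub_nonneg.2 hb)]
  nlinarith

/-- The difference of the two sides of `sub_mul_lt` at `ω = (n + 2)/(b + 1)`, times `(b + 1)²`. -/
theorem scaled_gap_pos_at_lower_bound (hb : 1 ≤ b) (hl : 2 ≤ l)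
    (hn : (5 * b ^ 2 + 8 * b + 6) * l - 2 * b ^ 2 - 4 * b - 10 ≤ 2 * n) :
    0 < 2 * (n + 2) ^ 2 + (n + 2) * (1 - 4 * l) * (b + 1)
      + (b + 1) ^ 2 * (n * (1 - 2 * l) + 4 * l ^ 2 - 2 * l) := by
  have hn0 : 0 ≤ n := by nlinarith
  have hlin : 0 ≤ 2 * n + (8 + (1 - 4 * l) * (b + 1) + (1 - 2 * l) * (b + 1) ^ 2) := by
    nlinarith [mul_nonneg (sq_nonneg b) (sub_nonneg.2 hl),
      mul_nonneg (sub_nonneg.2 hb) (by linarith : (0 : ℝ) ≤ b)]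
  have hconst : 0 < 8 + 2 * (1 - 4 * l) * (b + 1) + (b + 1) ^ 2 * (4 * l ^ 2 - 2 * l) := by
    have hb1 : (0 : ℝ) ≤ b + 1 := by linarith
    nlinarith [mul_nonneg (mul_nonneg (sub_nonneg.2 hb) hb1)
        (by nlinarith : (0 : ℝ) ≤ 4 * l ^ 2 - 2 * l),
      mul_nonneg hb1 (by nlinarith : (0 : ℝ) ≤ 8 * l ^ 2 - 12 * l + 2)]
  linarith [mul_nonneg hn0 hlin]

theorem sub_mul_lt (hb : 1 ≤ b) (hl : 2 ≤ l)
    (hn : (5 * b ^ 2 + 8 * b + 6) * l - 2 * b ^ 2 - 4 * b - 10 ≤ 2 * n)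
    (hω : n + 2 ≤ (b + 1) * ω) :
    (n - ω) * ω < (n + ω - 2 * l) * (ω - 2 * l + 1) := by
  have hmono :
      0 ≤ ((b + 1) * ω - (n + 2)) * (2 * ((b + 1) * ω + n + 2) - (4 * l - 1) * (b + 1)) :=
    mul_nonneg (by linarith) (by
      nlinarith [mul_nonneg (sub_nonneg.2 hl)
        (by positivity : (0 : ℝ) ≤ 10 * b ^ 2 + 12 * b + 8)])
  have key : (b + 1) ^ 2 * ((n + ω - 2 * l) * (ω - 2 * l + 1) - (n - ω) * ω) =
      2 * (n + 2) ^ 2 + (n + 2) * (1 - 4 * l) * (b + 1)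
        + (b + 1) ^ 2 * (n * (1 - 2 * l) + 4 * l ^ 2 - 2 * l)
        + ((b + 1) * ω - (n + 2)) * (2 * ((b + 1) * ω + n + 2) - (4 * l - 1) * (b + 1)) := by
    ring
  have hpos : 0 < (b + 1) ^ 2 * ((n + ω - 2 * l) * (ω - 2 * l + 1) - (n - ω) * ω) := by
    rw [key]
    exact add_pos_of_pos_of_nonneg (scaled_gap_pos_at_lower_bound hb hl hn) hmono
  linarith [pos_of_mul_pos_right hpos (sq_nonneg (b + 1))]

end Arithmetic

/-- For `b ≥ 1`, `l ≥ 2`,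
`n ≥ max{(5b²/2 + 4b + 3)l − b² − 2b − 5, ((2b+1)l² + (2b−3)l + 2)/2}`, and
`ω = ⌈(n+2)/(b+1)⌉ = (n + b + 2)/(b + 1)` (natural division):
`q(K_{n−ω} ∨ ωK₁) < 2n − 2l`. -/
theorem statement10 (b l n : ℕ) (hb : 1 ≤ b) (hl : 2 ≤ l)
    (hn1 : ((5 * b ^ 2 + 8 * b + 6) * l - 2 * b ^ 2 - 4 * b - 10 : ℤ) ≤ 2 * n)
    (hn2 : ((2 * b + 1) * l ^ 2 + (2 * b - 3) * l + 2 : ℤ) ≤ 2 * n) :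
    qIndex (joinCliques (n - (n + b + 2) / (b + 1))
        (fun _ : Fin ((n + b + 2) / (b + 1)) => 1))
      < 2 * (n : ℝ) - 2 * (l : ℝ) := by
  set ω := (n + b + 2) / (b + 1)
  have hωN : n + 2 ≤ (b + 1) * ω ∧ (b + 1) * ω ≤ n + b + 2 := by
    have hdiv : (b + 1) * ω + (n + b + 2) % (b + 1) = n + b + 2 := Nat.div_add_mod _ _
    have hmod : (n + b + 2) % (b + 1) < b + 1 := Nat.mod_lt _ (by omega)
    omega
  have hb' : (1 : ℝ) ≤ b := by exact_mod_cast hb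
  have hl' : (2 : ℝ) ≤ l := by exact_mod_cast hl
  have hn1' : ((5 * b ^ 2 + 8 * b + 6) * l - 2 * b ^ 2 - 4 * b - 10 : ℝ) ≤ 2 * n := by
    exact_mod_cast hn1
  have hn2' : ((2 * b + 1) * l ^ 2 + (2 * b - 3) * l + 2 : ℝ) ≤ 2 * n := by exact_mod_cast hn2
  have hlo : (n : ℝ) + 2 ≤ (b + 1) * ω := by exact_mod_cast hωN.1
  have hhi : ((b : ℝ) + 1) * ω ≤ n + b + 2 := by exact_mod_cast hωN.2
  have hωn : ω ≤ n := by exact_mod_cast le_of_mul_le_add hb' hl' hn2' hhi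
  have hω2l := two_mul_sub_one_lt hb' hl' hn1' hlo
  have : Nonempty (Fin (n - ω) ⊕ (Σ _ : Fin ω, Fin 1)) :=
    ⟨Sum.inr ⟨⟨0, Nat.div_pos (by omega) b.succ_pos⟩, 0⟩⟩
  refine sSup_spectrum_lt_of_mulVec_lt (signlessLaplacian_nonneg _)
    (w := Sum.elim (fun _ => (ω : ℝ)) fun _ => ω - 2 * l + 1) ?_ ?_
  · rintro (_ | _) <;> simp only [Sum.elim_inl, Sum.elim_inr] <;> linarith
  · rintro (a | p)
    · rw [joinCliques_one_mulVec_inl, Nat.cast_sub hωn]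
      simp only [Sum.elim_inl]
      linarith
    · rw [joinCliques_one_mulVec_inr, Nat.cast_sub hωn]
      simp only [Sum.elim_inr]
      linarith [sub_mul_lt hb' hl' hn1' hlo]
end
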